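/- arXiv:1704.06096 — 2 statements merged into one kernel-verified Lean document; each statement's English description precedes it below -/
import Mathlib

section
/- Let X_1, …, X_d be i.i.d. ℕ-valued random variables with P(X_i > n) = p(n) for a non-increasing p : ℕ → [0,1], p(0) = 1, and suppose E[X_1] < ∞. Let κ = min{ n ∈ ℕ : p(n) < 1/d }. Then E[max(X_1,…,X_d)] ≥ κ(1 - 1/e) and E[max(X_1,…,X_d)] ≤ κ + 2d Σ_{n=κ}^∞ p(n). -/
open MeasureTheory ProbabilityTheory Finset

/-!
For independent variables, `P(max > t) = 1 - (1 - p t)^d`, so `E[max] = ∑ₜ (1 - (1 - p t)^d)`.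
Below `κ` we have `p t ≥ 1/d`, hence `(1 - p t)^d ≤ (1 - 1/d)^d ≤ e⁻¹` and each such term is at
least `1 - e⁻¹`. Every term is at most `1`, and by Bernoulli's inequality at most `d * p t`, which
bounds the terms from `κ` on.
-/

lemma measureReal_lt_sup_eq_one_sub_prod {Ω ι : Type*} [MeasurableSpace Ω] {μ : Measure Ω}
    [IsProbabilityMeasure μ] [Fintype ι] {X : ι → Ω → ℕ} (hX : ∀ i, Measurable (X i))
    (hindep : iIndepFun X μ) (t : ℕ) :
    μ.real {ω | t < univ.sup fun i => X i ω} = 1 - ∏ i, (1 - μ.real {ω | t < X i ω}) := by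
  have hmax : {ω | t < univ.sup fun i => X i ω} = (⋂ i, X i ⁻¹' Set.Iic t)ᶜ := by
    ext; simp
  have hle : ∀ i, X i ⁻¹' Set.Iic t = {ω | t < X i ω}ᶜ := fun i => by
    ext; simp
  rw [hmax, probReal_compl_eq_one_sub (.iInter fun i => hX i measurableSet_Iic), measureReal_def,
    hindep.meas_iInter fun i => ⟨Set.Iic t, measurableSet_Iic, rfl⟩, ENNReal.toReal_prod]
  refine congrArg _ (prod_congr rfl fun i _ => ?_)
  exact hle i ▸ probReal_compl_eq_one_sub (hX i measurableSet_Ioi)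

section OneSubOneSubPow

variable {q : ℝ}

lemma one_sub_one_sub_pow_nonneg (d : ℕ) (hq0 : 0 ≤ q) (hq1 : q ≤ 1) : 0 ≤ 1 - (1 - q) ^ d :=
  sub_nonneg.2 (pow_le_one₀ (by linarith) (by linarith))

lemma one_sub_one_sub_pow_le_one (d : ℕ) (hq1 : q ≤ 1) : 1 - (1 - q) ^ d ≤ 1 :=
  sub_le_self _ (pow_nonneg (by linarith) d)

lemma one_sub_one_sub_pow_le_mul (d : ℕ) (hq1 : q ≤ 1) : 1 - (1 - q) ^ d ≤ d * q := by
  have := one_add_mul_le_pow (a := -q) (by linarith) d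
  rw [← sub_eq_add_neg] at this
  linarith

lemma one_sub_inv_exp_le_one_sub_one_sub_pow {d : ℕ} (hd : 1 ≤ d) (hq : 1 / d ≤ q) (hq1 : q ≤ 1) :
    1 - (Real.exp 1)⁻¹ ≤ 1 - (1 - q) ^ d := calc
  1 - (Real.exp 1)⁻¹ = 1 - Real.exp (-1) := by rw [Real.exp_neg]
  _ ≤ 1 - (1 - 1 / d) ^ d := sub_le_sub_left (Real.one_sub_div_pow_le_exp_neg (by simpa)) _
  _ ≤ 1 - (1 - q) ^ d := sub_le_sub_left (pow_le_pow_left₀ (by linarith) (by linarith) d) _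

end OneSubOneSubPow

section Tsum

variable {f : ℕ → ℝ}

lemma mul_le_tsum_of_le_of_lt {c : ℝ} {k : ℕ} (hf : Summable f) (hf0 : ∀ n, 0 ≤ f n)
    (hc : ∀ n < k, c ≤ f n) : k * c ≤ ∑' n, f n := calc
  k * c = ∑ _n ∈ range k, c := by simp
  _ ≤ ∑ n ∈ range k, f n := sum_le_sum fun n hn => hc n (mem_range.1 hn)
  _ ≤ ∑' n, f n := hf.sum_le_tsum _ fun n _ => hf0 n

lemma tsum_le_add_mul_tsum_nat_add {g : ℕ → ℝ} {c : ℝ} (k : ℕ) (hf : Summable f)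
    (hg : Summable g) (hf1 : ∀ n, f n ≤ 1) (hfg : ∀ n, f n ≤ c * g n) :
    ∑' n, f n ≤ k + c * ∑' n, g (n + k) := by
  rw [← hf.sum_add_tsum_nat_add k, ← tsum_mul_left]
  refine add_le_add ((sum_le_sum fun n _ => hf1 n).trans (by simp)) ?_
  exact ((summable_nat_add_iff k).2 hf).tsum_le_tsum (fun n => hfg _)
      (((summable_nat_add_iff k).2 hg).mul_left c)

end Tsum

theorem stmt8_general {Ω : Type*} [MeasureSpace Ω] [IsProbabilityMeasure (volume : Measure Ω)]
    (d : ℕ) (hd : 1 ≤ d) (X : Fin d → Ω → ℕ) (hXmeas : ∀ i, Measurable (X i))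
    (hindep : ProbabilityTheory.iIndepFun X volume)
    (p : ℕ → ℝ)
    (hdist : ∀ i n, (volume {ω | n < X i ω}).toReal = p n)
    (hpsum : Summable p)
    (κ : ℕ) (hκ : κ = sInf {n : ℕ | p n < 1 / d}) :
    (κ : ℝ) * (1 - (Real.exp 1)⁻¹) ≤
        (∑' t : ℕ, (volume {ω | t < Finset.univ.sup fun i => X i ω}).toReal) ∧
      (∑' t : ℕ, (volume {ω | t < Finset.univ.sup fun i => X i ω}).toReal) ≤
        (κ : ℝ) + 2 * d * ∑' n : ℕ, p (n + κ) := by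
  have hp0 : ∀ n, 0 ≤ p n := fun n => hdist ⟨0, hd⟩ n ▸ ENNReal.toReal_nonneg
  have hp1 : ∀ n, p n ≤ 1 := fun n => hdist ⟨0, hd⟩ n ▸ measureReal_le_one
  have htail : ∀ t : ℕ, (volume {ω | t < univ.sup fun i => X i ω}).toReal = 1 - (1 - p t) ^ d :=
    fun t => by
      simp_rw [← measureReal_def, measureReal_lt_sup_eq_one_sub_prod hXmeas hindep t,
        measureReal_def, hdist, prod_const, card_univ, Fintype.card_fin]
  simp_rw [htail]
  have hsum : Summable fun t => 1 - (1 - p t) ^ d :=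
    .of_nonneg_of_le (fun t => one_sub_one_sub_pow_nonneg d (hp0 t) (hp1 t))
      (fun t => one_sub_one_sub_pow_le_mul d (hp1 t)) (hpsum.mul_left (d : ℝ))
  have hbelow : ∀ t < κ, 1 / (d : ℝ) ≤ p t := fun t ht =>
    not_lt.1 (Nat.notMem_of_lt_sInf (hκ ▸ ht))
  refine ⟨mul_le_tsum_of_le_of_lt hsum (fun t => one_sub_one_sub_pow_nonneg d (hp0 t) (hp1 t))
    fun t ht => one_sub_inv_exp_le_one_sub_one_sub_pow hd (hbelow t ht) (hp1 t), ?_⟩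
  calc ∑' t, (1 - (1 - p t) ^ d) ≤ κ + d * ∑' n, p (n + κ) :=
        tsum_le_add_mul_tsum_nat_add κ hsum hpsum (fun t => one_sub_one_sub_pow_le_one d (hp1 t))
          fun t => one_sub_one_sub_pow_le_mul d (hp1 t)
    _ ≤ κ + 2 * d * ∑' n, p (n + κ) := by
      gcongr
      · exact tsum_nonneg fun n => hp0 _
      · linarith

theorem stmt8 {Ω : Type*} [MeasureSpace Ω] [IsProbabilityMeasure (volume : Measure Ω)]
    (d : ℕ) (hd : 1 ≤ d) (X : Fin d → Ω → ℕ) (hXmeas : ∀ i, Measurable (X i))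
    (hindep : ProbabilityTheory.iIndepFun X volume)
    (p : ℕ → ℝ) (hanti : Antitone p) (hp0 : p 0 = 1)
    (hdist : ∀ i n, (volume {ω | n < X i ω}).toReal = p n)
    (hpsum : Summable p)
    (κ : ℕ) (hκ : κ = sInf {n : ℕ | p n < 1 / d}) :
    (κ : ℝ) * (1 - (Real.exp 1)⁻¹) ≤
        (∑' t : ℕ, (volume {ω | t < Finset.univ.sup fun i => X i ω}).toReal) ∧
      (∑' t : ℕ, (volume {ω | t < Finset.univ.sup fun i => X i ω}).toReal) ≤
        (κ : ℝ) + 2 * d * ∑' n : ℕ, p (n + κ) :=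
  stmt8_general d hd X hXmeas hindep p hdist hpsum κ hκ
end

section
/- Let X, Y be independent geometric random variables on {1,2,3,…} with success probability p. In the alternating scheme where knock 2k−1 is the k-th knock on door 1 and knock 2k is the k-th knock on door 2, the expected time until both doors open is E[max(2X−1, 2Y)] = 3/p − 1. -/
open Finset

lemma lin_summable {q : ℝ} (hq0 : 0 ≤ q) (hq1 : q < 1) (a b : ℝ) :
    Summable (fun m : ℕ => (a * m + b) * q ^ m) := by
  have h1 : Summable (fun m : ℕ => a * ((m : ℝ) * q ^ m)) := by
    refine Summable.mul_left a ?_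
    have := summable_pow_mul_geometric_of_norm_lt_one (R := ℝ) 1
      (r := q) (by rwa [Real.norm_eq_abs, abs_of_nonneg hq0])
    simpa using this
  have h2 : Summable (fun m : ℕ => b * q ^ m) :=
    (summable_geometric_of_lt_one hq0 hq1).mul_left b
  exact (h1.add h2).congr fun m => by ring

lemma lin_tsum {q : ℝ} (hq0 : 0 ≤ q) (hq1 : q < 1) (a b : ℝ) :
    ∑' m : ℕ, (a * m + b) * q ^ m = a * q / (1 - q) ^ 2 + b / (1 - q) := by
  have h1 : Summable (fun m : ℕ => a * ((m : ℝ) * q ^ m)) := by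
    refine Summable.mul_left a ?_
    have := summable_pow_mul_geometric_of_norm_lt_one (R := ℝ) 1
      (r := q) (by rwa [Real.norm_eq_abs, abs_of_nonneg hq0])
    simpa using this
  have h2 : Summable (fun m : ℕ => b * q ^ m) :=
    (summable_geometric_of_lt_one hq0 hq1).mul_left b
  have key : ∀ m : ℕ, (a * m + b) * q ^ m
      = a * ((m : ℝ) * q ^ m) + b * q ^ m := fun m => by ring
  rw [tsum_congr key, Summable.tsum_add h1 h2, tsum_mul_left, tsum_mul_left,
    tsum_coe_mul_geometric_of_norm_lt_one
      (by rwa [Real.norm_eq_abs, abs_of_nonneg hq0]),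
    tsum_geometric_of_lt_one hq0 hq1]
  ring

theorem stmt12 (p : ℝ) (hp0 : 0 < p) (hp1 : p ≤ 1) :
    ∑' (j : ℕ) (k : ℕ),
        (max (2 * (j + 1) - 1) (2 * (k + 1)) : ℝ) *
          ((p * (1 - p) ^ j) * (p * (1 - p) ^ k)) = 3 / p - 1 := by
  obtain ⟨q, hqdef⟩ : ∃ q : ℝ, q = 1 - p := ⟨_, rfl⟩
  rw [← hqdef]
  have hq0 : 0 ≤ q := by rw [hqdef]; linarith
  have hq1 : q < 1 := by rw [hqdef]; linarith
  have hqp : 1 - q = p := by rw [hqdef]; ring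
  have hqne : q ≠ 1 := ne_of_lt hq1
  have hp' : p ≠ 0 := ne_of_gt hp0
  have h1q0 : (1:ℝ) - q ≠ 0 := by rw [hqp]; exact hp'
  -- inner sum computation
  have hinner : ∀ j : ℕ,
      (∑' k : ℕ, (max (2 * ((j:ℝ) + 1) - 1) (2 * ((k:ℝ) + 1)) : ℝ) *
          ((p * q ^ j) * (p * q ^ k)))
      = (2 * (j:ℝ) + 1) * p * q ^ j + (p + 2 * q) * (q ^ 2) ^ j := by
    intro j
    set f : ℕ → ℝ := fun k =>
      (max (2 * ((j:ℝ) + 1) - 1) (2 * ((k:ℝ) + 1))) * ((p * q ^ j) * (p * q ^ k)) with hf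
    have hfnn : ∀ k, 0 ≤ f k := by
      intro k
      have hj : (0:ℝ) ≤ (j:ℝ) := Nat.cast_nonneg j
      have hmax : (0:ℝ) ≤ max (2 * ((j:ℝ) + 1) - 1) (2 * ((k:ℝ) + 1)) := by
        have : (0:ℝ) ≤ 2 * ((j:ℝ) + 1) - 1 := by linarith
        exact le_trans this (le_max_left _ _)
      have hq0' : (0:ℝ) ≤ (p * q ^ j) * (p * q ^ k) := by positivity
      exact mul_nonneg hmax hq0'
    have hgsum : Summable (fun k : ℕ =>
        (2 * (k:ℝ) + (2 * j + 2)) * q ^ k * ((p * q ^ j) * p)) :=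
      (lin_summable hq0 hq1 2 (2 * j + 2)).mul_right _
    have hfsum : Summable f := by
      refine Summable.of_nonneg_of_le hfnn ?_ hgsum
      intro k
      have hj : (0:ℝ) ≤ (j:ℝ) := Nat.cast_nonneg j
      have hk : (0:ℝ) ≤ (k:ℝ) := Nat.cast_nonneg k
      have h1 : max (2 * ((j:ℝ) + 1) - 1) (2 * ((k:ℝ) + 1))
          ≤ 2 * (k:ℝ) + (2 * j + 2) := by
        apply max_le <;> linarith
      have h2 : (0:ℝ) ≤ (p * q ^ j) * (p * q ^ k) := by positivity
      calc f k ≤ (2 * (k:ℝ) + (2 * j + 2)) * ((p * q ^ j) * (p * q ^ k)) :=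
            mul_le_mul_of_nonneg_right h1 h2
        _ = (2 * (k:ℝ) + (2 * j + 2)) * q ^ k * ((p * q ^ j) * p) := by ring
    rw [← Summable.sum_add_tsum_nat_add j hfsum]
    have hA : ∑ i ∈ range j, f i = (2 * (j:ℝ) + 1) * p * q ^ j * (1 - q ^ j) := by
      have h1 : ∀ i ∈ range j, f i
          = ((2 * (j:ℝ) + 1) * (p * q ^ j * p)) * q ^ i := by
        intro i hi
        have hij : (i:ℝ) + 1 ≤ (j:ℝ) := by
          exact_mod_cast Nat.succ_le_of_lt (mem_range.mp hi)
        have hmax : max (2 * ((j:ℝ) + 1) - 1) (2 * ((i:ℝ) + 1))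
            = 2 * ((j:ℝ) + 1) - 1 := max_eq_left (by linarith)
        simp only [hf, hmax]; ring
      rw [Finset.sum_congr rfl h1, ← Finset.mul_sum, geom_sum_eq hqne]
      have hq1' : q - 1 ≠ 0 := sub_ne_zero.mpr hqne
      field_simp
      rw [← hqp]
      ring
    have hB : ∑' m : ℕ, f (m + j)
        = (p + 2 * q) * (q ^ 2) ^ j + (2 * (j:ℝ) + 1) * p * q ^ j * q ^ j := by
      have h1 : ∀ m : ℕ, f (m + j)
          = ((2 * (m:ℝ) + (2 * j + 2)) * q ^ m) * (p * p * (q ^ 2) ^ j) := by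
        intro m
        have hmj : (0:ℝ) ≤ (m:ℝ) := Nat.cast_nonneg m
        have hmax : max (2 * ((j:ℝ) + 1) - 1) (2 * (((m + j : ℕ):ℝ) + 1))
            = 2 * (((m + j : ℕ):ℝ) + 1) := by
          apply max_eq_right
          push_cast
          linarith
        simp only [hf, hmax]
        push_cast
        ring
      rw [tsum_congr h1, tsum_mul_right, lin_tsum hq0 hq1 2 (2 * j + 2)]
      field_simp
      rw [← hqp]
      ring
    rw [hA, hB]
    ring
  rw [tsum_congr hinner]
  have hs1 : Summable (fun j : ℕ => ((2:ℝ) * j + 1) * q ^ j * p) :=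
    (lin_summable hq0 hq1 2 1).mul_right p
  have hs1' : Summable (fun j : ℕ => ((2:ℝ) * j + 1) * p * q ^ j) :=
    hs1.congr fun j => by ring
  have hq20 : (0:ℝ) ≤ q ^ 2 := by positivity
  have hq21 : q ^ 2 < 1 := by nlinarith
  have hs2 : Summable (fun j : ℕ => (p + 2 * q) * (q ^ 2) ^ j) :=
    (summable_geometric_of_lt_one hq20 hq21).mul_left _
  rw [Summable.tsum_add hs1' hs2, tsum_mul_left, tsum_geometric_of_lt_one hq20 hq21]
  have h1 : ∑' j : ℕ, ((2:ℝ) * j + 1) * p * q ^ j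
      = p * (2 * q / (1 - q) ^ 2 + 1 / (1 - q)) := by
    have : ∀ j : ℕ, ((2:ℝ) * j + 1) * p * q ^ j = p * (((2:ℝ) * j + 1) * q ^ j) :=
      fun j => by ring
    rw [tsum_congr this, tsum_mul_left, lin_tsum hq0 hq1 2 1]
  rw [h1]
  have h2 : 1 - q ^ 2 ≠ 0 := by nlinarith
  field_simp
  rw [← hqp]
  ring
end
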